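/- For every β ∈ ℝ, the symmetric bilinear form B_β on 𝔡_J defined by B_β((v,v⁻,v⁺),(w,w⁻,w⁺)) = ⟨v,w⟩ + v⁺·w⁻ + w⁺·v⁻ + β·v⁻·w⁻ is invariant: B_β([x,y],z) = B_β(x,[y,z]) for all x,y,z ∈ 𝔡_J. -/
import Mathlib


open scoped RealInnerProductSpace

/-- The bracket of the double extension `𝔡_J = 𝔡(V,ℝ)` on `V × ℝ × ℝ`, elements written
`(v, v⁻, v⁺)`: `[(v,v⁻,v⁺),(w,w⁻,w⁺)] = (v⁻·Jw − w⁻·Jv, 0, ⟨Jv, w⟩)`. -/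
def dJBracket {V : Type*} [NormedAddCommGroup V] [InnerProductSpace ℝ V]
    (J : V →ₗ[ℝ] V) (x y : V × ℝ × ℝ) : V × ℝ × ℝ :=
  (x.2.1 • J y.1 - y.2.1 • J x.1, 0, ⟪J x.1, y.1⟫)

/-- The symmetric bilinear form `B_β` on `𝔡_J`:
`B_β((v,v⁻,v⁺),(w,w⁻,w⁺)) = ⟨v,w⟩ + v⁺·w⁻ + w⁺·v⁻ + β·v⁻·w⁻`. -/
def dJForm {V : Type*} [NormedAddCommGroup V] [InnerProductSpace ℝ V]
    (β : ℝ) (x y : V × ℝ × ℝ) : ℝ :=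
  ⟪x.1, y.1⟫ + x.2.2 * y.2.1 + y.2.2 * x.2.1 + β * x.2.1 * y.2.1

/-- For every `β ∈ ℝ`, the form `B_β` on `𝔡_J` is invariant:
`B_β([x,y],z) = B_β(x,[y,z])`. -/
theorem dJForm_invariant
    {V : Type*} [NormedAddCommGroup V] [InnerProductSpace ℝ V] [FiniteDimensional ℝ V]
    (J : V →ₗ[ℝ] V) (hJ : ∀ v w : V, ⟪J v, w⟫ = -⟪v, J w⟫) (β : ℝ) :
    ∀ x y z : V × ℝ × ℝ,
      dJForm β (dJBracket J x y) z = dJForm β x (dJBracket J y z) := by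
  intro x y z
  simp only [dJForm, dJBracket, inner_sub_left, inner_sub_right, real_inner_smul_left,
    real_inner_smul_right, hJ]
  ring
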